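/- arXiv:1903.03671 — 3 statements merged into one kernel-verified Lean document; each statement's English description precedes it below -/
import Mathlib

section
/- There is a faithful identity-on-objects correspondence from asymmetric lenses to learners with trivial parameter set that preserves composition: mapping a lens (p,g): A → B to the learner (1, I, U, r) with I(*,a) = g(a), U(b,*,a) = *, r(b,*,a) = p(b,a), the learner composite of the images of two lenses equals (up to the unique isomorphism 1 × 1 ≅ 1) the image of their lens composite. -/
section Learner
variable {A B C P Q : Type*}

/-- Composite implementation `(I∗J)(q,p,a) = J(q, I(p,a))`. -/
def compI (I : P → A → B) (J : Q → B → C) : Q × P → A → C :=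
  fun qp a => J qp.1 (I qp.2 a)

/-- Composite update, with the `Q`-component first so as to land in `Q × P`. -/
def compU (I : P → A → B) (U : B → P → A → P) (V : C → Q → B → Q) (s : C → Q → B → B) :
    C → Q × P → A → Q × P :=
  fun c qp a => (V c qp.1 (I qp.2 a), U (s c qp.1 (I qp.2 a)) qp.2 a)

/-- Composite request `(r∗s)(c,(q,p),a) = r(s(c,q,I(p,a)),p,a)`. -/
def compr (I : P → A → B) (r : B → P → A → A) (s : C → Q → B → B) :
    C → Q × P → A → A :=
  fun c qp a => r (s c qp.1 (I qp.2 a)) qp.2 a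

end Learner

/-- A lens `(p, g) : A → B` yields the learner on trivial parameter set `1` with
implementation `g`, trivial update, and request `p`. This correspondence is
identity-on-objects, trivially faithful, and preserves composition: the learner
composite of the images of two lenses is, up to the unique isomorphism
`1 × 1 ≅ 1`, the image of the composite lens. -/
theorem lens_to_learner_functorial {A B C : Type*}
    (p : B × A → A) (g : A → B) (p' : C × B → B) (g' : B → C) :
    let I : PUnit → A → B := fun _ a => g a
    let U : B → PUnit → A → PUnit := fun _ _ _ => PUnit.unit
    let r : B → PUnit → A → A := fun b _ a => p (b, a)
    let J : PUnit → B → C := fun _ b => g' b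
    let V : C → PUnit → B → PUnit := fun _ _ _ => PUnit.unit
    let s : C → PUnit → B → B := fun c _ b => p' (c, b)
    -- the composite of the image learners is the image of the composite lens,
    -- modulo the unique isomorphism `PUnit × PUnit ≅ PUnit`:
    (∀ (u : PUnit × PUnit) (a : A), compI I J u a = g' (g a)) ∧
    (∀ (c : C) (u : PUnit × PUnit) (a : A),
      compU I U V s c u a = (PUnit.unit, PUnit.unit)) ∧
    (∀ (c : C) (u : PUnit × PUnit) (a : A),
      compr I r s c u a = p (p' (c, g a), a)) := by
  exact ⟨fun _ _ => rfl, fun _ _ _ => rfl, fun _ _ _ => rfl⟩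
end

section
/- Under the identification of the pullback T with P₂ × P₁ × A₁, the left leg of the composite symmetric lens (the composition of the lens (q̄₂, h̄₂): T → P₁ × A₁ with the constant complement lens P₁ × A₁ → A₁) is the constant complement lens (k, π₃): P₂ × P₁ × A₁ → A₁, i.e. it has Get (m₂,m₁,a₁) ↦ a₁ and Put (a₁', (m₂,m₁,a₁)) ↦ (m₂,m₁,a₁'). -/
/-- Under the identification of the pullback `T` with `P₂ × P₁ × A₁`, the left leg of the
composite symmetric lens (the composition of the lens `(q̄₂, h̄₂) : T → P₁ × A₁` with the
constant complement lens `P₁ × A₁ → A₁`) is the constant complement lens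
`(k, π₃) : P₂ × P₁ × A₁ → A₁`, with Get `(m₂,m₁,a₁) ↦ a₁` and
Put `(a₁', (m₂,m₁,a₁)) ↦ (m₂,m₁,a₁')`. -/
theorem composite_leftLeg_constantComplement {A₁ A₂ P₁ P₂ : Type*} (g₂ : P₁ × A₁ → A₂) :
    -- the pullback of `g₂` along the projection `P₂ × A₂ → A₂`
    let T := {y : (P₁ × A₁) × (P₂ × A₂) // g₂ y.1 = y.2.2}
    -- the identification `P₂ × P₁ × A₁ ≅ T`
    let e : P₂ × P₁ × A₁ → T := fun x => ⟨((x.2.1, x.2.2), (x.1, g₂ (x.2.1, x.2.2))), rfl⟩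
    -- constant complement Put on `P₂ × A₂`
    let q₂ : A₂ × (P₂ × A₂) → P₂ × A₂ := fun w => (w.2.1, w.1)
    -- the lens `(q̄₂, h̄₂) : T → P₁ × A₁`
    let h₂bar : T → P₁ × A₁ := fun t => t.val.1
    let q₂bar : (P₁ × A₁) × T → T := fun w => ⟨(w.1, q₂ (g₂ w.1, w.2.val.2)), rfl⟩
    -- the constant complement lens `P₁ × A₁ → A₁`
    let k : A₁ × (P₁ × A₁) → P₁ × A₁ := fun w => (w.2.1, w.1)
    -- the composite lens `T → A₁`: Get is the composite of Gets, and
    -- Put is `(a₁', t) ↦ q̄₂(k(a₁', h̄₂ t), t)`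
    let compGet : T → A₁ := fun t => (h₂bar t).2
    let compPut : A₁ × T → T := fun w => q₂bar (k (w.1, h₂bar w.2), w.2)
    ∀ (x : P₂ × P₁ × A₁) (a₁' : A₁),
      compGet (e x) = x.2.2 ∧ compPut (a₁', e x) = e (x.1, x.2.1, a₁') := by
  intro T e q₂ h₂bar q₂bar k compGet compPut x a₁'
  exact ⟨rfl, rfl⟩
end

section
/- If two learners (P,I,U,r), (Q,J,V,s): A → B and (P',I',U',r'), (Q',J',V',s'): B → C are related by surjections f: P → P' and h: Q → Q' satisfying conditions (E') (preserving implementations, updates, and requests), then the product map h × f: Q × P → Q' × P' satisfies conditions (E') between the composite learners. -/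
/-- If `f : P → P'` and `h : Q → Q'` satisfy conditions (E') between learners
`(P,I,U,r), (P',I',U',r') : A → B` and `(Q,J,V,s), (Q',J',V',s') : B → C`
respectively, then `h × f : Q × P → Q' × P'` satisfies conditions (E') between
the composite learners. -/
theorem conditionsE'_comp {A B C P P' Q Q' : Type*}
    (I : P → A → B) (U : B → P → A → P) (r : B → P → A → A)
    (I' : P' → A → B) (U' : B → P' → A → P') (r' : B → P' → A → A)
    (J : Q → B → C) (V : C → Q → B → Q) (s : C → Q → B → B)
    (J' : Q' → B → C) (V' : C → Q' → B → Q') (s' : C → Q' → B → B)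
    (f : P → P') (h : Q → Q')
    (hfSurj : Function.Surjective f)
    (hfI : ∀ (p : P) (a : A), I' (f p) a = I p a)
    (hfU : ∀ (b : B) (p : P) (a : A), U' b (f p) a = f (U b p a))
    (hfr : ∀ (b : B) (p : P) (a : A), r' b (f p) a = r b p a)
    (hhSurj : Function.Surjective h)
    (hhJ : ∀ (q : Q) (b : B), J' (h q) b = J q b)
    (hhV : ∀ (c : C) (q : Q) (b : B), V' c (h q) b = h (V c q b))
    (hhs : ∀ (c : C) (q : Q) (b : B), s' c (h q) b = s c q b) :
    Function.Surjective (Prod.map h f) ∧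
    (∀ (qp : Q × P) (a : A), compI I' J' (Prod.map h f qp) a = compI I J qp a) ∧
    (∀ (c : C) (qp : Q × P) (a : A),
      compU I' U' V' s' c (Prod.map h f qp) a = Prod.map h f (compU I U V s c qp a)) ∧
    (∀ (c : C) (qp : Q × P) (a : A),
      compr I' r' s' c (Prod.map h f qp) a = compr I r s c qp a) := by
  refine ⟨hhSurj.prodMap hfSurj, ?_, ?_, ?_⟩ <;>
    intros <;> simp [compI, compU, compr, Prod.map, hfI, hfU, hfr, hhJ, hhV, hhs]
end
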